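/- In the Markov-modulated setting with |S|>1, assume condition (E): for every i∈S there exists c_i∈R with P_i(A_1^i c_i+B_1^i=c_i)=1, and assume P_i(A_1^i=1)=1 for all i∈S. Then: (a) there exist functions f_A:S²→R∖{0} and f_B:S²→R such that (A_1,B_1)=(f_A(M_0,M_1),f_B(M_0,M_1)) a.s.; (b) there exists a family (Φ_{ij})_{i,j∈S} of nonconstant affine linear functions on R with Φ_{ij}=Φ_{ji}^{−1} for all i,j∈S (so Φ_{ii}=id), such that P_i(Ψ_1∘…∘Ψ_n=Φ_{ij}|M_n=j)=1 whenever P_i(M_n=j)>0, and in particular Ψ_n=Φ_{M_{n-1}M_n} a.s. for all n≥1; (c) for each (j,c)∈S×R there exists a family (c_i)_{i∈S} with c_j=Φ_{jj}(c)=c such that P_π(A_1c_{M_1}+B_1=c_{M_0})=1 and Π_n c_{M_n}+∑_{k=1}^n Π_{k-1}B_k=c_{M_0} a.s. for all n∈N. -/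

import Mathlib

open MeasureTheory ProbabilityTheory Filter
open scoped ENNReal NNReal Topology

noncomputable section

namespace Perpetuities

/-- The positive part of the logarithm, with the convention `log⁺ 0 = 0`. -/
def logplus (x : ℝ) : ℝ := max (Real.log x) 0

/-- Weak convergence of a sequence of (probability) measures on `ℝ`. -/
def WeakLim (μ : ℕ → Measure ℝ) (ν : Measure ℝ) : Prop :=
  ∀ f : BoundedContinuousFunction ℝ ℝ,
    Tendsto (fun n => ∫ x, f x ∂ μ n) atTop (nhds (∫ x, f x ∂ ν))

/-- `|f n| → ∞` in `μ`-probability. -/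
def TendstoInfInMeasure {Ω : Type*} [MeasurableSpace Ω] (μ : Measure Ω) (f : ℕ → Ω → ℝ) : Prop :=
  ∀ x : ℝ, 0 < x → Tendsto (fun n => μ {ω | |f n ω| ≤ x}) atTop (nhds 0)

/-- `d` is the lattice span (period) of the distribution of the `ℕ`-valued random
variable `T` under `μ`, i.e. `d` is the greatest common divisor of the support. -/
def LatticeSpan {Ω : Type*} [MeasurableSpace Ω] (μ : Measure Ω) (T : Ω → ℕ) (d : ℕ) : Prop :=
  (∀ n, 0 < μ {ω | T ω = n} → d ∣ n) ∧ ∀ e : ℕ, (∀ n, 0 < μ {ω | T ω = n} → e ∣ n) → e ∣ d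

/-- The Markov-modulated setting: an ergodic (irreducible, aperiodic, positive recurrent)
Markov chain `M` on a countable state space `S` with transition matrix `p` and stationary
distribution `π`, modulating a sequence `(A_n, B_n)_{n ≥ 1}` of real random pairs (indexed
here so that `A n`, `B n` are the paper's `A_{n+1}`, `B_{n+1}`): conditionally on the whole
path of the chain, the pairs are independent and the conditional law of `(A_{n+1}, B_{n+1})`
given the path depends only on `(M_n, M_{n+1})`, via the stochastic kernel `K`.
`P i` is the underlying probability measure conditioned on `M 0 = i`. -/
structure MMSetting (S : Type*) (Ω : Type*) [MeasurableSpace S] [MeasurableSingletonClass S]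
    [Countable S] [MeasurableSpace Ω] where
  P : S → Measure Ω
  prob : ∀ i, IsProbabilityMeasure (P i)
  π : S → ℝ≥0∞
  πsum : ∑' i, π i = 1
  πpos : ∀ i, 0 < π i
  p : S → S → ℝ≥0∞
  psum : ∀ i, ∑' j, p i j = 1
  stationary : ∀ j, ∑' i, π i * p i j = π j
  K : S → S → Measure (ℝ × ℝ)
  Kprob : ∀ i j, IsProbabilityMeasure (K i j)
  M : ℕ → Ω → S
  A : ℕ → Ω → ℝ
  B : ℕ → Ω → ℝ
  measM : ∀ n, Measurable (M n)
  measA : ∀ n, Measurable (A n)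
  measB : ∀ n, Measurable (B n)
  start : ∀ i, P i {ω | M 0 ω = i} = 1
  chain : ∀ (i : S) (n : ℕ) (path : ℕ → S), path 0 = i →
    P i (⋂ k ∈ Finset.range (n + 1), {ω | M k ω = path k})
      = ∏ k ∈ Finset.range n, p (path k) (path (k + 1))
  modulated : ∀ (i : S) (n : ℕ) (path : ℕ → S) (E : ℕ → Set (ℝ × ℝ)), path 0 = i →
    (∀ k, MeasurableSet (E k)) →
    P i ((⋂ k ∈ Finset.range (n + 1), {ω | M k ω = path k}) ∩
        ⋂ k ∈ Finset.range n, {ω | (A k ω, B k ω) ∈ E k})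
      = P i (⋂ k ∈ Finset.range (n + 1), {ω | M k ω = path k})
        * ∏ k ∈ Finset.range n, K (path k) (path (k + 1)) (E k)
  irreducible : ∀ i j, ∃ n, 0 < P i {ω | M n ω = j}
  recurrent : ∀ i, P i {ω | ∃ n, 0 < n ∧ M n ω = i} = 1
  posRecurrent : ∀ i, ∫⁻ ω, ((sInf {n | 0 < n ∧ M n ω = i} : ℕ) : ℝ≥0∞) ∂ P i < ⊤
  aperiodic : ∀ (i : S) (d : ℕ), (∀ n, 0 < n → 0 < P i {ω | M n ω = i} → d ∣ n) → d = 1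

namespace MMSetting

variable {S : Type*} [MeasurableSpace S] [MeasurableSingletonClass S] [Countable S]
variable {Ω : Type*} [MeasurableSpace Ω]
variable (X : MMSetting S Ω)

/-- `Pπ = ∑ i, π i • P i`, the stationary (unconditional) probability measure. -/
def Pπ : Measure Ω := Measure.sum fun i => X.π i • X.P i

/-- `Pprod n = Π_n = A_1 ⋯ A_n`, with `Π_0 = 1`. -/
def Pprod (n : ℕ) (ω : Ω) : ℝ := ∏ k ∈ Finset.range n, X.A k ω

/-- `Ssum n = ∑_{k=1}^n Π_{k-1} B_k`, the value `Ψ_1 ∘ ⋯ ∘ Ψ_n (0)` of the backward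
iteration started at `0`. -/
def Ssum (n : ℕ) (ω : Ω) : ℝ := ∑ k ∈ Finset.range n, X.Pprod k ω * X.B k ω

/-- `Zb Z n = Ψ_1 ∘ ⋯ ∘ Ψ_n (Z) = Π_n Z + ∑_{k=1}^n Π_{k-1} B_k`, the backward iteration. -/
def Zb (Z : Ω → ℝ) (n : ℕ) (ω : Ω) : ℝ := X.Pprod n ω * Z ω + X.Ssum n ω

/-- `Zf Z n = Ψ_n ∘ ⋯ ∘ Ψ_1 (Z)`, the forward iteration. -/
def Zf (Z : Ω → ℝ) : ℕ → Ω → ℝ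
  | 0 => Z
  | n + 1 => fun ω => X.A n ω * Zf Z n ω + X.B n ω

/-- The perpetuity `Z_∞ = ∑_{n ≥ 1} Π_{n-1} B_n`. -/
def Zinf (ω : Ω) : ℝ := ∑' n, X.Pprod n ω * X.B n ω

/-- `tau i n = τ_n(i)`, the `n`-th return time of the driving chain to the state `i`
(`τ_0(i) = 0`). -/
def tau (i : S) : ℕ → Ω → ℕ
  | 0 => fun _ => 0
  | n + 1 => fun ω => sInf {k | tau i n ω < k ∧ X.M k ω = i}

/-- `A_1^i = Π_{τ(i)}`. -/
def Ai (i : S) (ω : Ω) : ℝ := X.Pprod (X.tau i 1 ω) ω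

/-- `B_1^i = ∑_{k=1}^{τ(i)} Π_{k-1} B_k`. -/
def Bi (i : S) (ω : Ω) : ℝ := X.Ssum (X.tau i 1 ω) ω

/-- `W^i = max_{1 ≤ k ≤ τ(i)} |Π_{k-1} B_k|`. -/
def Wi (i : S) (ω : Ω) : ℝ :=
  (((Finset.range (X.tau i 1 ω)).sup fun k => ‖X.Pprod k ω * X.B k ω‖₊ : ℝ≥0) : ℝ)

/-- `S_{τ(i)} = - log |Π_{τ(i)}|`. -/
def Stau (i : S) (ω : Ω) : ℝ := - Real.log |X.Ai i ω|

/-- The function `J_i`: `J_i(0) = 1`, and for `x > 0`, `J_i(x) = x / E_i (S_{τ(i)}⁺ ∧ x)`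
if `P_i(S_{τ(i)} ≤ 0) < 1`, and `J_i(x) = x` otherwise. -/
def Ji (i : S) (x : ℝ) : ℝ :=
  if x = 0 then 1
  else if X.P i {ω | X.Stau i ω ≤ 0} < 1 then
    x / ∫ ω, min (max (X.Stau i ω) 0) x ∂ X.P i
  else x

/-- `τ̂(i) = inf {k ≥ 1 : M_k = i, Π_k = 1}`. -/
def hatτ (i : S) (ω : Ω) : ℕ := sInf {k | 0 < k ∧ X.M k ω = i ∧ X.Pprod k ω = 1}

/-- `Z` is an admissible initial value: it is (conditionally on `M 0`, i.e. under each `P i`)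
independent of the modulated sequence `(M_n, A_n, B_n)_{n ≥ 1}`. -/
def Admissible (Z : Ω → ℝ) : Prop :=
  Measurable Z ∧
    ∀ i : S, IndepFun Z (fun ω => fun n : ℕ => (X.M (n + 1) ω, X.A n ω, X.B n ω)) (X.P i)

/-- The degeneracy condition: `A_1 c_{M_1} + B_1 = c_{M_0}` a.s. for the family `c`. -/
def DegenD (c : S → ℝ) : Prop :=
  ∀ᵐ ω ∂ X.Pπ, X.A 0 ω * c (X.M 1 ω) + X.B 0 ω = c (X.M 0 ω)

/-- The dual degeneracy condition: `A_1 c_{M_0} + B_1 = c_{M_1}` a.s. for the family `c`. -/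
def DegenDdual (c : S → ℝ) : Prop :=
  ∀ᵐ ω ∂ X.Pπ, X.A 0 ω * c (X.M 0 ω) + X.B 0 ω = c (X.M 1 ω)

end MMSetting

end Perpetuities

/-!
Along a first return of the chain to `i`, the pairs `(A_k, B_k)` are conditionally independent
given the path, and (E) together with `A_1^i = 1` forces their composition, as affine maps, to be
a.s. the identity. Composition with an invertible affine map is injective on either side, so each
factor is deterministic: every kernel `K i j` on an edge of the chain is a Dirac mass at an
invertible affine map `g i j`. Then every first-return cycle, hence every closed walk, composes to
the identity, so the composition `Φ i j` of `g` along a walk from `i` to `j` depends only on its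
endpoints, and `Ψ_1 ∘ ⋯ ∘ Ψ_n = Φ (M_0) (M_n)` a.s. For (c) take `c_i = Φ i j (c)`.
-/

namespace Perpetuities

open MMSetting Set

/-- `(a, b) : ℝ × ℝ` encodes the affine map `x ↦ a * x + b`, and `affComp x y` encodes
`x ∘ y`. -/
def affComp (x y : ℝ × ℝ) : ℝ × ℝ := (x.1 * y.1, x.2 + x.1 * y.2)

def affEval (x : ℝ × ℝ) (t : ℝ) : ℝ := x.1 * t + x.2

lemma affEval_affComp (x y : ℝ × ℝ) (t : ℝ) :
    affEval (affComp x y) t = affEval x (affEval y t) := by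
  simp only [affEval, affComp]; ring

@[simp] lemma one_affComp (y : ℝ × ℝ) : affComp (1, 0) y = y := by simp [affComp]

@[simp] lemma affComp_one (x : ℝ × ℝ) : affComp x (1, 0) = x := by simp [affComp]

lemma affComp_assoc (x y z : ℝ × ℝ) : affComp (affComp x y) z = affComp x (affComp y z) := by
  simp only [affComp, Prod.ext_iff]; constructor <;> ring

lemma affComp_left_cancel {x y z : ℝ × ℝ} (hx : x.1 ≠ 0) (h : affComp x y = affComp x z) :
    y = z := by
  simp only [affComp, Prod.ext_iff] at h
  exact Prod.ext (mul_left_cancel₀ hx h.1) (mul_left_cancel₀ hx (add_left_cancel h.2))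

lemma affComp_right_cancel {x y z : ℝ × ℝ} (hz : z.1 ≠ 0) (h : affComp x z = affComp y z) :
    x = y := by
  simp only [affComp, Prod.ext_iff] at h
  have h1 : x.1 = y.1 := mul_right_cancel₀ hz h.1
  exact Prod.ext h1 (by rw [h1] at h; linarith [h.2])

lemma measurable_affComp : Measurable fun q : (ℝ × ℝ) × (ℝ × ℝ) => affComp q.1 q.2 := by
  unfold affComp; fun_prop

/-- `affCompN n w = w 0 ∘ w 1 ∘ ⋯ ∘ w (n - 1)`. -/
def affCompN : ℕ → (ℕ → ℝ × ℝ) → ℝ × ℝ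
  | 0, _ => (1, 0)
  | n + 1, w => affComp (affCompN n w) (w n)

lemma affCompN_congr {n : ℕ} {w w' : ℕ → ℝ × ℝ} (h : ∀ k < n, w k = w' k) :
    affCompN n w = affCompN n w' := by
  induction n with
  | zero => rfl
  | succ n ih =>
    simp only [affCompN, h n n.lt_succ_self, ih fun k hk => h k (hk.trans n.lt_succ_self)]

lemma affCompN_add (w : ℕ → ℝ × ℝ) (m n : ℕ) :
    affCompN (m + n) w = affComp (affCompN m w) (affCompN n fun k => w (m + k)) := by
  induction n with
  | zero => simp [affCompN]
  | succ n ih => rw [← add_assoc, affCompN, ih, affComp_assoc]; rfl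

lemma affCompN_fst (n : ℕ) (w : ℕ → ℝ × ℝ) :
    (affCompN n w).1 = ∏ k ∈ Finset.range n, (w k).1 := by
  induction n with
  | zero => rfl
  | succ n ih => rw [affCompN, affComp, Finset.prod_range_succ, ← ih]

lemma measurable_affCompN (n : ℕ) : Measurable (affCompN n) := by
  induction n with
  | zero => exact measurable_const
  | succ n ih => exact measurable_affComp.comp (ih.prodMk (measurable_pi_apply n))

def extendSeq {α : Type*} {n : ℕ} (d : α) (y : Fin n → α) : ℕ → α :=
  fun k => if h : k < n then y ⟨k, h⟩ else d

lemma measurable_extendSeq {α : Type*} [MeasurableSpace α] {n : ℕ} (d : α) :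
    Measurable (extendSeq (n := n) d) := by
  refine measurable_pi_lambda _ fun k => ?_
  by_cases h : k < n
  · simpa [extendSeq, h] using measurable_pi_apply (⟨k, h⟩ : Fin n)
  · simp [extendSeq, h]

lemma affCompN_extendSeq_succ {n : ℕ} (y : Fin (n + 1) → ℝ × ℝ) :
    affCompN (n + 1) (extendSeq (1, 0) y)
      = affComp (affCompN n (extendSeq (1, 0) (Fin.init y))) (y (Fin.last n)) := by
  have h : ∀ k < n, extendSeq (1, 0) y k = extendSeq (1, 0) (Fin.init y) k := fun k hk => by
    simp [extendSeq, hk, Nat.lt_succ_of_lt hk, Fin.init]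
  rw [affCompN, affCompN_congr h]
  simp [extendSeq, Fin.last]

lemma affCompN_extendSeq_eq {n : ℕ} (d : ℝ × ℝ) (w : ℕ → ℝ × ℝ) :
    affCompN n (extendSeq d fun k : Fin n => w k) = affCompN n w :=
  affCompN_congr fun k hk => by simp [extendSeq, hk]

lemma eq_dirac_of_ae_eq {α : Type*} [MeasurableSpace α] [MeasurableSingletonClass α]
    {μ : Measure α} [IsProbabilityMeasure μ] {a : α} (h : ∀ᵐ x ∂μ, x = a) :
    μ = Measure.dirac a := by
  have hμa : μ {a} = 1 := (prob_compl_eq_zero_iff (measurableSet_singleton a)).1 (ae_iff.1 h)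
  rw [← Measure.restrict_eq_self_of_ae_mem (s := {a}) h, Measure.restrict_singleton, hμa,
    one_smul]

/-- `G` need not be measurable, so `μ Gᶜ = 0` is not available. -/
lemma ae_of_measure_eq_one {Ω : Type*} [MeasurableSpace Ω] {μ : Measure Ω}
    [IsProbabilityMeasure μ] {G : Set Ω} (hG : μ G = 1) {q : Ω → Prop}
    (hq : MeasurableSet {ω | q ω}) (h : ∀ ω ∈ G, q ω) : ∀ᵐ ω ∂μ, q ω :=
  (prob_compl_eq_zero_iff hq).2 (le_antisymm prob_le_one (hG ▸ measure_mono h))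

/-- Composition with an invertible affine map is injective on either side, so the last factor
is a.s. a function of the independent others, hence deterministic. -/
theorem exists_eq_dirac_of_ae_affCompN_eq {n : ℕ} (μ : Fin n → Measure (ℝ × ℝ))
    [∀ k, IsProbabilityMeasure (μ k)] {c : ℝ × ℝ} (hc : c.1 ≠ 0)
    (h : ∀ᵐ y ∂Measure.pi μ, affCompN n (extendSeq (1, 0) y) = c) :
    ∃ x : Fin n → ℝ × ℝ, (∀ k, μ k = Measure.dirac (x k)) ∧
      affCompN n (extendSeq (1, 0) x) = c := by
  induction n generalizing c with
  | zero =>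
    obtain ⟨y, hy⟩ := h.exists
    exact ⟨y, fun k => k.elim0, hy⟩
  | succ n ih =>
    set F : (Fin n → ℝ × ℝ) → ℝ × ℝ := fun t => affCompN n (extendSeq (1, 0) t)
    have hF : Measurable F := (measurable_affCompN n).comp (measurable_extendSeq _)
    have hprod : ∀ᵐ q ∂(μ (Fin.last n)).prod (Measure.pi fun j => μ (Fin.castSucc j)),
        affComp (F q.2) q.1 = c := by
      have hmp := measurePreserving_piFinSuccAbove μ (Fin.last n)
      simp only [Fin.succAbove_last] at hmp
      rw [← hmp.map_eq, (MeasurableEquiv.measurableEmbedding _).ae_map_iff]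
      filter_upwards [h] with y hy
      simpa [MeasurableEquiv.piFinSuccAbove_apply, affCompN_extendSeq_succ] using hy
    have hmeas :
        MeasurableSet {q : (ℝ × ℝ) × (Fin n → ℝ × ℝ) | affComp (F q.2) q.1 = c} :=
      (measurable_affComp.comp ((hF.comp measurable_snd).prodMk measurable_fst))
        (measurableSet_singleton c)
    have hleft := Measure.ae_ae_of_ae_prod hprod
    obtain ⟨t₀, ht₀⟩ := ((Measure.ae_ae_comm hmeas).1 hleft).exists
    obtain ⟨a₀, ha₀⟩ := ht₀.exists
    have hc₀ : (F t₀).1 * a₀.1 ≠ 0 := by rwa [← ha₀] at hc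
    have hlast : μ (Fin.last n) = Measure.dirac a₀ :=
      eq_dirac_of_ae_eq (ht₀.mono fun a ha =>
        affComp_left_cancel (left_ne_zero_of_mul hc₀) (ha.trans ha₀.symm))
    have hinit : ∀ᵐ t ∂Measure.pi fun j => μ (Fin.castSucc j), affComp (F t) a₀ = c := by
      simpa [hlast] using hleft
    obtain ⟨t₁, ht₁⟩ := hinit.exists
    have hc₁ : (F t₁).1 * a₀.1 ≠ 0 := by rwa [← ht₁] at hc
    obtain ⟨x, hx, hxF⟩ := ih (fun j => μ (Fin.castSucc j)) (left_ne_zero_of_mul hc₁)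
      (hinit.mono fun t ht =>
        affComp_right_cancel (right_ne_zero_of_mul hc₁) (ht.trans ht₁.symm))
    refine ⟨Fin.snoc x a₀, Fin.lastCases (by simpa using hlast) fun j => by simpa using hx j,
      ?_⟩
    rw [affCompN_extendSeq_succ, Fin.init_snoc, Fin.snoc_last, hxF]
    exact ht₁

section Walks

variable {S : Type*} {r : S → S → Prop} {g : S → S → ℝ × ℝ}

def IsWalk (r : S → S → Prop) (v : ℕ → S) (n : ℕ) : Prop := ∀ k < n, r (v k) (v (k + 1))

def Reachable (r : S → S → Prop) (i j : S) : Prop :=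
  ∃ n v, v 0 = i ∧ v n = j ∧ IsWalk r v n

def IsFirstReturn (v : ℕ → S) (n : ℕ) : Prop :=
  0 < n ∧ v n = v 0 ∧ ∀ k, 0 < k → k < n → v k ≠ v 0

def pathComp (g : S → S → ℝ × ℝ) (v : ℕ → S) (n : ℕ) : ℝ × ℝ :=
  affCompN n fun k => g (v k) (v (k + 1))

def HasTrivialHolonomy (r : S → S → Prop) (g : S → S → ℝ × ℝ) : Prop :=
  ∀ v n, IsWalk r v n → v n = v 0 → pathComp g v n = (1, 0)

def walkAppend (v : ℕ → S) (m : ℕ) (w : ℕ → S) : ℕ → S :=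
  fun k => if k ≤ m then v k else w (k - m)

lemma walkAppend_of_le {v w : ℕ → S} {m k : ℕ} (hk : k ≤ m) : walkAppend v m w k = v k :=
  if_pos hk

lemma walkAppend_add {v w : ℕ → S} {m : ℕ} (hvw : v m = w 0) (k : ℕ) :
    walkAppend v m w (m + k) = w k := by
  rcases k with _ | k
  · simpa [walkAppend] using hvw
  · simp [walkAppend]

lemma IsWalk.of_le {v : ℕ → S} {m n : ℕ} (hv : IsWalk r v n) (hmn : m ≤ n) : IsWalk r v m :=
  fun k hk => hv k (hk.trans_le hmn)

lemma IsWalk.shift {v : ℕ → S} {m n : ℕ} (hv : IsWalk r v (m + n)) :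
    IsWalk r (fun k => v (m + k)) n :=
  fun k hk => hv (m + k) (by omega)

lemma IsWalk.walkAppend {v w : ℕ → S} {m n : ℕ} (hv : IsWalk r v m) (hw : IsWalk r w n)
    (hvw : v m = w 0) : IsWalk r (walkAppend v m w) (m + n) := by
  intro k hk
  rcases lt_or_ge k m with hkm | hkm
  · rw [walkAppend_of_le hkm.le, walkAppend_of_le hkm]
    exact hv k hkm
  · obtain ⟨l, rfl⟩ := Nat.exists_eq_add_of_le hkm
    rw [walkAppend_add hvw, add_assoc, walkAppend_add hvw]
    exact hw l (by omega)

lemma pathComp_congr {v v' : ℕ → S} {n : ℕ} (h : ∀ k ≤ n, v k = v' k) :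
    pathComp g v n = pathComp g v' n :=
  affCompN_congr fun k hk => by rw [h k hk.le, h (k + 1) hk]

lemma pathComp_add (v : ℕ → S) (m n : ℕ) :
    pathComp g v (m + n) = affComp (pathComp g v m) (pathComp g (fun k => v (m + k)) n) :=
  affCompN_add _ m n

lemma pathComp_walkAppend {v w : ℕ → S} {m : ℕ} (hvw : v m = w 0) (n : ℕ) :
    pathComp g (walkAppend v m w) (m + n) = affComp (pathComp g v m) (pathComp g w n) := by
  rw [pathComp_add, pathComp_congr fun k hk => walkAppend_of_le hk,
    pathComp_congr fun k _ => walkAppend_add hvw k]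

lemma pathComp_fst_ne_zero (hg : ∀ i j, r i j → (g i j).1 ≠ 0) {v : ℕ → S} {n : ℕ}
    (hv : IsWalk r v n) : (pathComp g v n).1 ≠ 0 := by
  rw [pathComp, affCompN_fst]
  exact Finset.prod_ne_zero_iff.2 fun k hk => hg _ _ (hv k (Finset.mem_range.1 hk))

/-- A closed walk splits at its first return into a first-return walk and a shorter closed
walk. -/
lemma hasTrivialHolonomy_of_isFirstReturn
    (h : ∀ v n, IsWalk r v n → IsFirstReturn v n → pathComp g v n = (1, 0)) :
    HasTrivialHolonomy r g := by
  intro v n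
  induction n using Nat.strong_induction_on generalizing v with
  | _ n ih =>
    intro hv hvn
    rcases Nat.eq_zero_or_pos n with rfl | hn
    · rfl
    by_cases hfirst : ∀ k, 0 < k → k < n → v k ≠ v 0
    · exact h v n hv ⟨hn, hvn, hfirst⟩
    push Not at hfirst
    obtain ⟨m, hm0, hmn, hvm⟩ := hfirst
    obtain ⟨l, rfl⟩ := Nat.exists_eq_add_of_lt hmn
    rw [show m + l + 1 = m + (l + 1) by omega] at hv hvn ⊢
    rw [pathComp_add, ih m (by omega) v (hv.of_le (by omega)) hvm,
      ih (l + 1) (by omega) _ hv.shift (by simpa [hvm] using hvn), one_affComp]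

lemma Reachable.refl (i : S) : Reachable r i i :=
  ⟨0, fun _ => i, rfl, rfl, fun _ h => absurd h (Nat.not_lt_zero _)⟩

lemma exists_isFirstReturn_of_rel {i j : S} (hij : r i j) (hji : Reachable r j i) :
    ∃ v n, v 0 = i ∧ v 1 = j ∧ IsWalk r v n ∧ IsFirstReturn v n := by
  classical
  obtain ⟨m, w, hw0, hwm, hw⟩ := hji
  have hex : ∃ k, w k = i := ⟨m, hwm⟩
  have hle : Nat.find hex ≤ m := Nat.find_min' hex hwm
  let v : ℕ → S := fun | 0 => i | k + 1 => w k
  refine ⟨v, Nat.find hex + 1, rfl, hw0, fun k hk => ?_, Nat.succ_pos _, Nat.find_spec hex,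
    fun k hk0 hk => ?_⟩
  · rcases k with _ | k
    · simpa [v, hw0] using hij
    · exact hw k (by omega)
  · obtain ⟨k, rfl⟩ := Nat.exists_eq_succ_of_ne_zero hk0.ne'
    exact Nat.find_min hex (by omega)

open Classical in
def transport (r : S → S → Prop) (g : S → S → ℝ × ℝ) (i j : S) : ℝ × ℝ :=
  if h : Reachable r i j then pathComp g h.choose_spec.choose h.choose else (1, 0)

lemma transport_eq_pathComp (hg : ∀ i j, r i j → (g i j).1 ≠ 0)
    (hhol : HasTrivialHolonomy r g) {i j : S} (hji : Reachable r j i) {v : ℕ → S} {n : ℕ}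
    (hv0 : v 0 = i) (hvn : v n = j)
    (hv : IsWalk r v n) : transport r g i j = pathComp g v n := by
  obtain ⟨m, w, hw0, hwm, hw⟩ := hji
  have hloop : ∀ (u : ℕ → S) (N : ℕ), u 0 = i → u N = j → IsWalk r u N →
      affComp (pathComp g u N) (pathComp g w m) = (1, 0) := fun u N hu0 huN hu => by
    rw [← pathComp_walkAppend (huN.trans hw0.symm)]
    refine hhol _ _ (hu.walkAppend hw (huN.trans hw0.symm)) ?_
    rw [walkAppend_add (huN.trans hw0.symm), walkAppend_of_le (Nat.zero_le _), hwm, hu0]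
  have hij : Reachable r i j := ⟨n, v, hv0, hvn, hv⟩
  obtain ⟨hu0, huN, hu⟩ := hij.choose_spec.choose_spec
  rw [transport, dif_pos hij]
  exact affComp_right_cancel (pathComp_fst_ne_zero hg hw)
    ((hloop _ _ hu0 huN hu).trans (hloop v n hv0 hvn hv).symm)

lemma transport_self (hg : ∀ i j, r i j → (g i j).1 ≠ 0) (hhol : HasTrivialHolonomy r g)
    (i : S) : transport r g i i = (1, 0) :=
  transport_eq_pathComp (v := fun _ => i) (n := 0) hg hhol (.refl i) rfl rfl
    fun _ h => absurd h (Nat.not_lt_zero _)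

lemma transport_trans (hg : ∀ i j, r i j → (g i j).1 ≠ 0) (hhol : HasTrivialHolonomy r g)
    (hr : ∀ i j, Reachable r i j) (i j k : S) :
    affComp (transport r g i j) (transport r g j k) = transport r g i k := by
  obtain ⟨m, v, hv0, hvm, hv⟩ := hr i j
  obtain ⟨n, w, hw0, hwn, hw⟩ := hr j k
  have hvw : v m = w 0 := hvm.trans hw0.symm
  rw [transport_eq_pathComp hg hhol (hr j i) hv0 hvm hv,
    transport_eq_pathComp hg hhol (hr k j) hw0 hwn hw,
    transport_eq_pathComp hg hhol (hr k i) (v := walkAppend v m w) (n := m + n)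
      (by rw [walkAppend_of_le (Nat.zero_le _), hv0]) (by rw [walkAppend_add hvw, hwn])
      (hv.walkAppend hw hvw),
    pathComp_walkAppend hvw]

lemma transport_fst_ne_zero (hg : ∀ i j, r i j → (g i j).1 ≠ 0)
    (hhol : HasTrivialHolonomy r g) (hr : ∀ i j, Reachable r i j) (i j : S) :
    (transport r g i j).1 ≠ 0 := by
  obtain ⟨n, v, hv0, hvn, hv⟩ := hr i j
  rw [transport_eq_pathComp hg hhol (hr j i) hv0 hvn hv]
  exact pathComp_fst_ne_zero hg hv

end Walks

namespace MMSetting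

variable {S : Type*} [MeasurableSpace S] [MeasurableSingletonClass S] [Countable S]
  {Ω : Type*} [MeasurableSpace Ω] (X : MMSetting S Ω)

def Step (i j : S) : Prop := 0 < X.p i j

def pathEv (v : ℕ → S) (n : ℕ) : Set Ω :=
  ⋂ k ∈ Finset.range (n + 1), {ω | X.M k ω = v k}

variable {X}

lemma mem_pathEv {v : ℕ → S} {n : ℕ} {ω : Ω} :
    ω ∈ X.pathEv v n ↔ ∀ k ≤ n, X.M k ω = v k := by
  simp [pathEv]

lemma measurableSet_pathEv (v : ℕ → S) (n : ℕ) : MeasurableSet (X.pathEv v n) :=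
  .biInter (Finset.countable_toSet _) fun k _ => X.measM k (measurableSet_singleton _)

lemma measure_pathEv_pos_iff {i : S} {v : ℕ → S} (hv0 : v 0 = i) (n : ℕ) :
    0 < X.P i (X.pathEv v n) ↔ IsWalk X.Step v n := by
  rw [pathEv, X.chain i n v hv0, pos_iff_ne_zero, Finset.prod_ne_zero_iff]
  simp [IsWalk, Step, pos_iff_ne_zero]

lemma ae_M_zero (i : S) : ∀ᵐ ω ∂X.P i, X.M 0 ω = i :=
  have := X.prob i
  (prob_compl_eq_zero_iff (X.measM 0 (measurableSet_singleton i))).2 (X.start i)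

/-- Countably many path events of length `n` cover `Ω`. -/
lemma measure_eq_zero_of_forall_pathEv {i : S} {n : ℕ} {T : Set Ω}
    (h : ∀ v, v 0 = i → IsWalk X.Step v n → X.P i (X.pathEv v n ∩ T) = 0) :
    X.P i T = 0 := by
  have hcover : T ⊆ ⋃ u : Fin (n + 1) → S, X.pathEv (extendSeq i u) n ∩ T := fun ω hω =>
    mem_iUnion.2 ⟨fun k => X.M k ω, mem_pathEv.2 fun k hk => by
      simp [extendSeq, Nat.lt_succ_of_le hk], hω⟩
  refine measure_mono_null hcover (measure_iUnion_null_iff.2 fun u => ?_)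
  by_cases hv0 : extendSeq i u 0 = i
  · by_cases hv : IsWalk X.Step (extendSeq i u) n
    · exact h _ hv0 hv
    · refine measure_mono_null inter_subset_left ?_
      simpa [← measure_pathEv_pos_iff hv0] using hv
  · refine measure_mono_null (fun ω hω => ?_) (ae_iff.1 (ae_M_zero i))
    rw [mem_ofPred_eq, mem_pathEv.1 hω.1 0 (Nat.zero_le n)]
    exact hv0

lemma reachable (i j : S) : Reachable X.Step i j := by
  obtain ⟨n, hn⟩ := X.irreducible i j
  by_contra hij
  refine hn.ne' (measure_eq_zero_of_forall_pathEv (n := n) fun v hv0 hv => ?_)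
  refine measure_mono_null (fun ω hω => hij ⟨n, v, hv0, ?_, hv⟩) measure_empty
  rw [← mem_pathEv.1 hω.1 n le_rfl]
  exact hω.2

lemma measure_pathEv_inter_pair {i : S} {v : ℕ → S} (hv0 : v 0 = i) {n k : ℕ} (hk : k < n)
    {s : Set (ℝ × ℝ)} (hs : MeasurableSet s) :
    X.P i (X.pathEv v n ∩ {ω | (X.A k ω, X.B k ω) ∈ s})
      = X.P i (X.pathEv v n) * X.K (v k) (v (k + 1)) s := by
  classical
  set E : ℕ → Set (ℝ × ℝ) := Function.update (fun _ => univ) k s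
  have hpair : ⋂ l ∈ Finset.range n, {ω | (X.A l ω, X.B l ω) ∈ E l}
      = {ω | (X.A k ω, X.B k ω) ∈ s} := by
    ext ω
    simp only [mem_iInter, Finset.mem_range, mem_ofPred_eq]
    refine ⟨fun h => by simpa [E] using h k hk, fun h l _ => ?_⟩
    rcases eq_or_ne l k with rfl | hlk <;> simp [E, *]
  have hK : ∏ l ∈ Finset.range n, X.K (v l) (v (l + 1)) (E l) = X.K (v k) (v (k + 1)) s := by
    rw [Finset.prod_eq_single_of_mem k (Finset.mem_range.2 hk) fun l _ hlk => ?_]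
    · simp [E]
    · have := X.Kprob (v l) (v (l + 1))
      simp [E, hlk]
  have := X.modulated i n v E hv0 fun l => by
    rcases eq_or_ne l k with rfl | hlk <;> simp [E, *]
  rwa [hpair, hK] at this

variable (X) in
lemma measurable_pairs (n : ℕ) : Measurable fun ω (k : Fin n) => (X.A k ω, X.B k ω) :=
  measurable_pi_lambda _ fun k => (X.measA k).prodMk (X.measB k)

lemma map_cond_pathEv {i : S} {v : ℕ → S} (hv0 : v 0 = i) {n : ℕ} (hv : IsWalk X.Step v n) :
    ((X.P i)[|X.pathEv v n]).map (fun ω (k : Fin n) => (X.A k ω, X.B k ω))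
      = Measure.pi fun k : Fin n => X.K (v k) (v (k + 1)) := by
  have := X.prob i
  have := fun k : Fin n => X.Kprob (v k) (v (k + 1))
  have hpos := (measure_pathEv_pos_iff hv0 n).2 hv
  refine (Measure.pi_eq fun s hs => ?_).symm
  have hs' : ∀ l, MeasurableSet (extendSeq univ s l) := fun l => by
    by_cases hl : l < n <;> simp [extendSeq, hl, hs]
  have hpre : (fun ω (k : Fin n) => (X.A k ω, X.B k ω)) ⁻¹' univ.pi s
      = ⋂ l ∈ Finset.range n, {ω | (X.A l ω, X.B l ω) ∈ extendSeq univ s l} := by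
    ext ω
    simp only [mem_preimage, mem_univ_pi, mem_iInter, Finset.mem_range, mem_ofPred_eq]
    exact ⟨fun h l hl => by simpa [extendSeq, hl] using h ⟨l, hl⟩,
      fun h k => by simpa [extendSeq] using h k k.isLt⟩
  have hmod : X.P i (X.pathEv v n ∩ _) = X.P i (X.pathEv v n) * _ :=
    X.modulated i n v _ hv0 hs'
  rw [Measure.map_apply (X.measurable_pairs n) (.univ_pi hs),
    cond_apply (measurableSet_pathEv v n), hpre, hmod, ← mul_assoc,
    ENNReal.inv_mul_cancel hpos.ne' (measure_ne_top _ _), one_mul,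
    Finset.prod_range fun l => X.K (v l) (v (l + 1)) (extendSeq univ s l)]
  exact Finset.prod_congr rfl fun k _ => by simp [extendSeq]

lemma tau_one_eq_of_mem_pathEv {v : ℕ → S} {n : ℕ} (hv : IsFirstReturn v n) {ω : Ω}
    (hω : ω ∈ X.pathEv v n) : X.tau (v 0) 1 ω = n := by
  show sInf {k | 0 < k ∧ X.M k ω = v 0} = n
  have hM := mem_pathEv.1 hω
  have hn : n ∈ {k | 0 < k ∧ X.M k ω = v 0} := ⟨hv.1, by rw [hM n le_rfl, hv.2.1]⟩
  refine le_antisymm (Nat.sInf_le hn) (le_of_not_gt fun hlt => ?_)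
  obtain ⟨hpos, hret⟩ := Nat.sInf_mem ⟨n, hn⟩
  exact hv.2.2 _ hpos hlt (by rw [← hM _ hlt.le]; exact hret)

variable (X) in
lemma pprod_ssum_succ (n : ℕ) (ω : Ω) :
    (X.Pprod (n + 1) ω, X.Ssum (n + 1) ω)
      = affComp (X.Pprod n ω, X.Ssum n ω) (X.A n ω, X.B n ω) := by
  simp [Pprod, Ssum, affComp, Finset.prod_range_succ, Finset.sum_range_succ]

variable (X) in
lemma pprod_ssum_eq_affCompN (n : ℕ) (ω : Ω) :
    (X.Pprod n ω, X.Ssum n ω) = affCompN n fun k => (X.A k ω, X.B k ω) := by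
  induction n with
  | zero => simp [Pprod, Ssum, affCompN]
  | succ n ih => rw [pprod_ssum_succ, ih, affCompN]

lemma measurable_pprod (n : ℕ) : Measurable (X.Pprod n) :=
  Finset.measurable_prod _ fun k _ => X.measA k

lemma measurable_ssum (n : ℕ) : Measurable (X.Ssum n) :=
  Finset.measurable_sum _ fun k _ => (measurable_pprod k).mul (X.measB k)

/-- On the path event `τ(i) = n`, so there `(A^i, B^i) = (Π_n, ∑_{k ≤ n} Π_{k-1} B_k)`, and
(E) with `A^i = 1` makes the composition of the `n` pairs a.s. the identity. -/
lemma exists_kernel_eq_dirac_of_isFirstReturn {i : S} {c : ℝ}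
    (hE : X.P i {ω | X.Ai i ω * c + X.Bi i ω = c} = 1) (hone : X.P i {ω | X.Ai i ω = 1} = 1)
    {v : ℕ → S} (hv0 : v 0 = i) {n : ℕ} (hv : IsWalk X.Step v n) (hret : IsFirstReturn v n) :
    ∃ x : Fin n → ℝ × ℝ, (∀ k : Fin n, X.K (v k) (v (k + 1)) = Measure.dirac (x k)) ∧
      affCompN n (extendSeq (1, 0) x) = (1, 0) := by
  have := X.prob i
  have hAB : ∀ ω ∈ X.pathEv v n, X.Ai i ω = X.Pprod n ω ∧ X.Bi i ω = X.Ssum n ω :=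
    fun ω hω => by simp only [Ai, Bi, ← hv0, tau_one_eq_of_mem_pathEv hret hω, and_self]
  have hmE := measurableSet_pathEv (X := X) v n
  have hA : ∀ᵐ ω ∂X.P i, ω ∈ X.pathEv v n → X.Pprod n ω = 1 :=
    ae_of_measure_eq_one hone (hmE.imp (measurable_pprod n (measurableSet_singleton 1)))
      fun ω hω hωE => (hAB ω hωE).1 ▸ hω
  have hB : ∀ᵐ ω ∂X.P i, ω ∈ X.pathEv v n → X.Pprod n ω * c + X.Ssum n ω = c :=
    ae_of_measure_eq_one hE (hmE.imp
      (((measurable_pprod n).mul_const c).add (measurable_ssum n) (measurableSet_singleton c)))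
      fun ω hω hωE => by rwa [← (hAB ω hωE).1, ← (hAB ω hωE).2]
  have hcond :
      ∀ᵐ ω ∂(X.P i)[|X.pathEv v n], affCompN n (fun k => (X.A k ω, X.B k ω)) = (1, 0) := by
    filter_upwards [cond_absolutelyContinuous.ae_le hA, cond_absolutelyContinuous.ae_le hB,
      ae_cond_mem hmE] with ω hωA hωB hω
    have hS := hωB hω
    rw [hωA hω, one_mul, add_eq_left] at hS
    rw [← pprod_ssum_eq_affCompN, hωA hω, hS]
  have hpi : ∀ᵐ y ∂Measure.pi fun k : Fin n => X.K (v k) (v (k + 1)),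
      affCompN n (extendSeq (1, 0) y) = (1, 0) := by
    have hset :
        MeasurableSet {y : Fin n → ℝ × ℝ | affCompN n (extendSeq (1, 0) y) = (1, 0)} :=
      (measurable_affCompN n).comp (measurable_extendSeq _) (measurableSet_singleton _)
    rw [← map_cond_pathEv hv0 hv, ae_map_iff (X.measurable_pairs n).aemeasurable hset]
    filter_upwards [hcond] with ω hω
    exact (affCompN_extendSeq_eq (1, 0) fun k => (X.A k ω, X.B k ω)).trans hω
  have := fun k : Fin n => X.Kprob (v k) (v (k + 1))
  exact exists_eq_dirac_of_ae_affCompN_eq _ one_ne_zero hpi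

lemma exists_kernel_eq_dirac {i j : S} {c : ℝ}
    (hE : X.P i {ω | X.Ai i ω * c + X.Bi i ω = c} = 1) (hone : X.P i {ω | X.Ai i ω = 1} = 1)
    (hij : X.Step i j) :
    ∃ x : ℝ × ℝ, x.1 ≠ 0 ∧ X.K i j = Measure.dirac x := by
  obtain ⟨v, n, hv0, hv1, hv, hret⟩ := exists_isFirstReturn_of_rel hij (reachable j i)
  obtain ⟨x, hx, hcomp⟩ := exists_kernel_eq_dirac_of_isFirstReturn hE hone hv0 hv hret
  have hslope : ∏ k ∈ Finset.range n, (extendSeq (1, 0) x k).1 = 1 := by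
    rw [← affCompN_fst, hcomp]
  refine ⟨x ⟨0, hret.1⟩, ?_, by simpa [hv0, hv1] using hx ⟨0, hret.1⟩⟩
  have h0 := Finset.prod_ne_zero_iff.1 (hslope ▸ one_ne_zero) 0 (Finset.mem_range.2 hret.1)
  rwa [extendSeq, dif_pos hret.1] at h0

lemma hasTrivialHolonomy (c : S → ℝ)
    (hE : ∀ i, X.P i {ω | X.Ai i ω * c i + X.Bi i ω = c i} = 1)
    (hone : ∀ i, X.P i {ω | X.Ai i ω = 1} = 1) {g : S → S → ℝ × ℝ}
    (hg : ∀ i j, X.Step i j → X.K i j = Measure.dirac (g i j)) : HasTrivialHolonomy X.Step g :=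
  hasTrivialHolonomy_of_isFirstReturn fun v n hv hret => by
    obtain ⟨x, hx, hcomp⟩ :=
      exists_kernel_eq_dirac_of_isFirstReturn (hE (v 0)) (hone (v 0)) rfl hv hret
    rw [pathComp, ← hcomp]
    refine affCompN_congr fun k hk => ?_
    simpa [extendSeq, hk] using
      dirac_eq_dirac_iff.1 ((hg _ _ (hv k hk)).symm.trans (hx ⟨k, hk⟩))

lemma ae_step_and_pair_eq {g : S → S → ℝ × ℝ}
    (hg : ∀ i j, X.Step i j → X.K i j = Measure.dirac (g i j)) (i : S) :
    ∀ᵐ ω ∂X.P i, ∀ k, X.Step (X.M k ω) (X.M (k + 1) ω) ∧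
      (X.A k ω, X.B k ω) = g (X.M k ω) (X.M (k + 1) ω) := by
  refine ae_all_iff.2 fun k => ae_iff.2 (measure_eq_zero_of_forall_pathEv (n := k + 1)
    fun v hv0 hv => measure_mono_null (fun ω hω => ?_) ((measure_pathEv_inter_pair hv0
      k.lt_succ_self (measurableSet_singleton (g (v k) (v (k + 1)))).compl).trans ?_))
  · obtain ⟨hωE, hbad⟩ := hω
    change ¬(_ ∧ _) at hbad
    have hM := mem_pathEv.1 hωE
    rw [hM k k.le_succ, hM (k + 1) le_rfl] at hbad
    exact ⟨hωE, fun h => hbad ⟨hv k k.lt_succ_self, h⟩⟩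
  · rw [hg _ _ (hv k k.lt_succ_self), Measure.dirac_apply' _ (measurableSet_singleton _).compl]
    simp

variable (X) in
theorem exists_transport (c : S → ℝ)
    (hE : ∀ i, X.P i {ω | X.Ai i ω * c i + X.Bi i ω = c i} = 1)
    (hone : ∀ i, X.P i {ω | X.Ai i ω = 1} = 1) :
    ∃ Φ : S → S → ℝ × ℝ, (∀ i j, (Φ i j).1 ≠ 0) ∧ (∀ i, Φ i i = (1, 0)) ∧
      (∀ i j k, affComp (Φ i j) (Φ j k) = Φ i k) ∧
      ∀ i, ∀ᵐ ω ∂X.P i, ∀ n, (X.Pprod n ω, X.Ssum n ω) = Φ i (X.M n ω) := by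
  choose! g hg using fun i j (hij : X.Step i j) => exists_kernel_eq_dirac (hE i) (hone i) hij
  have hslope : ∀ i j, X.Step i j → (g i j).1 ≠ 0 := fun i j hij => (hg i j hij).1
  have hdirac : ∀ i j, X.Step i j → X.K i j = Measure.dirac (g i j) :=
    fun i j hij => (hg i j hij).2
  have hhol := hasTrivialHolonomy c hE hone hdirac
  refine ⟨transport X.Step g, transport_fst_ne_zero hslope hhol reachable,
    transport_self hslope hhol, transport_trans hslope hhol reachable, fun i => ?_⟩
  filter_upwards [ae_step_and_pair_eq hdirac i, ae_M_zero i] with ω hω hω0 n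
  rw [transport_eq_pathComp hslope hhol (reachable _ _) hω0 rfl fun k _ => (hω k).1,
    pprod_ssum_eq_affCompN]
  exact affCompN_congr fun k _ => (hω k).2

lemma ae_Pπ_of_forall_ae {q : Ω → Prop} (h : ∀ i, ∀ᵐ ω ∂X.P i, q ω) :
    ∀ᵐ ω ∂X.Pπ, q ω :=
  Measure.ae_sum_iff.2 fun i => Measure.ae_smul_measure (h i) _

lemma ae_Pπ_pprod_ssum_eq {Φ : S → S → ℝ × ℝ}
    (hΦ : ∀ i, ∀ᵐ ω ∂X.P i, ∀ n, (X.Pprod n ω, X.Ssum n ω) = Φ i (X.M n ω))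
    (n : ℕ) : ∀ᵐ ω ∂X.Pπ, (X.Pprod n ω, X.Ssum n ω) = Φ (X.M 0 ω) (X.M n ω) :=
  ae_Pπ_of_forall_ae fun i => by
    filter_upwards [hΦ i, ae_M_zero i] with ω hω hω0
    rw [hω0, hω n]

/-- Cancel `Φ (M 0) (M n)` on the left of `Φ (M 0) (M (n + 1))`. -/
lemma ae_pair_eq_of_pprod_ssum {μ : Measure Ω} {Φ : S → S → ℝ × ℝ}
    (htrans : ∀ i j k, affComp (Φ i j) (Φ j k) = Φ i k)
    (hΦ : ∀ n, ∀ᵐ ω ∂μ, (X.Pprod n ω, X.Ssum n ω) = Φ (X.M 0 ω) (X.M n ω))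
    (hslope : ∀ i j, (Φ i j).1 ≠ 0) (n : ℕ) :
    ∀ᵐ ω ∂μ, (X.A n ω, X.B n ω) = Φ (X.M n ω) (X.M (n + 1) ω) := by
  filter_upwards [hΦ n, hΦ (n + 1)] with ω hn hn1
  refine affComp_left_cancel (hslope (X.M 0 ω) (X.M n ω)) ?_
  rw [htrans, ← hn1, pprod_ssum_succ, hn]

lemma ae_pprod_mul_add_ssum_eq {μ : Measure Ω} {Φ : S → S → ℝ × ℝ}
    (htrans : ∀ i j k, affComp (Φ i j) (Φ j k) = Φ i k)
    (hΦ : ∀ n, ∀ᵐ ω ∂μ, (X.Pprod n ω, X.Ssum n ω) = Φ (X.M 0 ω) (X.M n ω))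
    (j : S) (t : ℝ) (n : ℕ) :
    ∀ᵐ ω ∂μ, X.Pprod n ω * affEval (Φ (X.M n ω) j) t + X.Ssum n ω
      = affEval (Φ (X.M 0 ω) j) t := by
  filter_upwards [hΦ n] with ω hω
  rw [← htrans (X.M 0 ω) (X.M n ω), affEval_affComp, ← hω]
  rfl

end MMSetting

theorem degeneracy_consequences_lattice_general
    {S : Type*} [MeasurableSpace S] [MeasurableSingletonClass S] [Countable S]
    {Ω : Type*} [MeasurableSpace Ω] (X : MMSetting S Ω)
    (c₀ : S → ℝ) (hE : ∀ i : S, X.P i {ω | X.Ai i ω * c₀ i + X.Bi i ω = c₀ i} = 1)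
    (hone : ∀ i : S, X.P i {ω | X.Ai i ω = 1} = 1) :
    (∃ fA fB : S → S → ℝ, (∀ i j : S, fA i j ≠ 0) ∧
        ∀ᵐ ω ∂ X.Pπ, X.A 0 ω = fA (X.M 0 ω) (X.M 1 ω) ∧ X.B 0 ω = fB (X.M 0 ω) (X.M 1 ω)) ∧
      (∃ α β : S → S → ℝ,
        (∀ i j : S, α i j ≠ 0) ∧
        (∀ (i j : S) (x : ℝ), α i j * (α j i * x + β j i) + β i j = x) ∧
        (∀ i : S, α i i = 1 ∧ β i i = 0) ∧
        (∀ (i j : S) (n : ℕ), 0 < X.P i {ω | X.M n ω = j} →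
          ∀ᵐ ω ∂ X.P i, X.M n ω = j → X.Pprod n ω = α i j ∧ X.Ssum n ω = β i j) ∧
        (∀ n : ℕ, ∀ᵐ ω ∂ X.Pπ,
          X.A n ω = α (X.M n ω) (X.M (n + 1) ω) ∧ X.B n ω = β (X.M n ω) (X.M (n + 1) ω))) ∧
      (∀ (j : S) (cv : ℝ), ∃ c : S → ℝ, c j = cv ∧ X.DegenD c ∧
        ∀ n : ℕ, 1 ≤ n →
          ∀ᵐ ω ∂ X.Pπ, X.Pprod n ω * c (X.M n ω) + X.Ssum n ω = c (X.M 0 ω)) := by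
  obtain ⟨Φ, hslope, hself, htrans, hΦ⟩ := X.exists_transport c₀ hE hone
  have hstep := ae_pair_eq_of_pprod_ssum htrans (ae_Pπ_pprod_ssum_eq hΦ) hslope
  have hback := ae_pprod_mul_add_ssum_eq htrans (ae_Pπ_pprod_ssum_eq hΦ)
  set α : S → S → ℝ := fun i j => (Φ i j).1
  set β : S → S → ℝ := fun i j => (Φ i j).2
  refine ⟨⟨α, β, hslope, (hstep 0).mono fun ω h => Prod.ext_iff.1 h⟩,
    ⟨α, β, hslope, fun i j x => ?_, fun i => Prod.ext_iff.1 (hself i), fun i j n _ => ?_,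
      fun n => (hstep n).mono fun ω h => Prod.ext_iff.1 h⟩,
    fun j cv => ⟨fun i => affEval (Φ i j) cv, by simp [hself, affEval], ?_,
      fun n _ => hback j cv n⟩⟩
  · change affEval (Φ i j) (affEval (Φ j i) x) = x
    rw [← affEval_affComp, htrans, hself]
    simp [affEval]
  · filter_upwards [hΦ i] with ω hω hωn
    rw [← hωn]
    exact Prod.ext_iff.1 (hω n)
  · simpa [DegenD, Pprod, Ssum] using hback j cv 1

/-- **Proposition 4.6** (consequences of degeneracy when all cycle products equal one).
In the Markov-modulated setting with `|S| > 1`, assume condition (E): for every `i ∈ S`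
there is `c_i ∈ ℝ` with `P_i(A_1^i c_i + B_1^i = c_i) = 1`, and assume
`P_i(A_1^i = 1) = 1` for all `i ∈ S`. Then:
(a) there are functions `f_A : S² → ℝ \ {0}` and `f_B : S² → ℝ` with
`(A_1, B_1) = (f_A(M_0, M_1), f_B(M_0, M_1))` a.s.;
(b) there is a family `(Φ_{ij})` of nonconstant affine maps `x ↦ α_{ij} x + β_{ij}`
with `Φ_{ij} = Φ_{ji}⁻¹` (so `Φ_{ii} = id`), such that conditioned on `M_n = j` the map
`Ψ_1 ∘ ⋯ ∘ Ψ_n` equals `Φ_{ij}` `P_i`-a.s. whenever `P_i(M_n = j) > 0`; in particular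
`Ψ_n = Φ_{M_{n-1} M_n}` a.s. for all `n ≥ 1`;
(c) for each `(j, c) ∈ S × ℝ` there is a family `(c_i)_{i ∈ S}` with `c_j = c` satisfying
the degeneracy condition (D) and `Π_n c_{M_n} + ∑_{k=1}^n Π_{k-1} B_k = c_{M_0}` a.s.
for all `n ≥ 1`. -/
theorem degeneracy_consequences_lattice
    {S : Type*} [MeasurableSpace S] [MeasurableSingletonClass S] [Countable S] [Nontrivial S]
    {Ω : Type*} [MeasurableSpace Ω] (X : MMSetting S Ω)
    (c₀ : S → ℝ) (hE : ∀ i : S, X.P i {ω | X.Ai i ω * c₀ i + X.Bi i ω = c₀ i} = 1)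
    (hone : ∀ i : S, X.P i {ω | X.Ai i ω = 1} = 1) :
    (∃ fA fB : S → S → ℝ, (∀ i j : S, fA i j ≠ 0) ∧
        ∀ᵐ ω ∂ X.Pπ, X.A 0 ω = fA (X.M 0 ω) (X.M 1 ω) ∧ X.B 0 ω = fB (X.M 0 ω) (X.M 1 ω)) ∧
      (∃ α β : S → S → ℝ,
        (∀ i j : S, α i j ≠ 0) ∧
        (∀ (i j : S) (x : ℝ), α i j * (α j i * x + β j i) + β i j = x) ∧
        (∀ i : S, α i i = 1 ∧ β i i = 0) ∧
        (∀ (i j : S) (n : ℕ), 0 < X.P i {ω | X.M n ω = j} →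
          ∀ᵐ ω ∂ X.P i, X.M n ω = j → X.Pprod n ω = α i j ∧ X.Ssum n ω = β i j) ∧
        (∀ n : ℕ, ∀ᵐ ω ∂ X.Pπ,
          X.A n ω = α (X.M n ω) (X.M (n + 1) ω) ∧ X.B n ω = β (X.M n ω) (X.M (n + 1) ω))) ∧
      (∀ (j : S) (cv : ℝ), ∃ c : S → ℝ, c j = cv ∧ X.DegenD c ∧
        ∀ n : ℕ, 1 ≤ n →
          ∀ᵐ ω ∂ X.Pπ, X.Pprod n ω * c (X.M n ω) + X.Ssum n ω = c (X.M 0 ω)) :=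
  degeneracy_consequences_lattice_general X c₀ hE hone

end Perpetuities
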